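/- For any two density matrices ρ_A on H_A and ρ_B on H_B, neither of which is pure, there exists a density matrix σ on H_A⊗H_B with tr_B(σ) = ρ_A, tr_A(σ) = ρ_B, and σ ≠ ρ_A⊗ρ_B. -/

import Mathlib

/-!
Diagonalise `ρA = ∑ pᵢ |aᵢ⟩⟨aᵢ|` and `ρB = ∑ qⱼ |bⱼ⟩⟨bⱼ|`. Every probability distribution `r` on
pairs `(i, j)` with marginals `p` and `q` gives the classically correlated state
`σ = ∑ rᵢⱼ |aᵢ bⱼ⟩⟨aᵢ bⱼ|`, whose partial traces are `ρA` and `ρB`, and `σ = ρA ⊗ ρB` only for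
`r = p ⊗ q`. A state that is not pure has two positive eigenvalues, so `p` admits a nonzero
perturbation `c` with `∑ c = 0` and `|c| ≤ p`, and likewise `e` for `q`; then
`r = p ⊗ q + c ⊗ e` is a distribution with the right marginals other than `p ⊗ q`.
-/

open Matrix Kronecker ComplexOrder

noncomputable def trA {m n : Type*} [Fintype m] (M : Matrix (m × n) (m × n) ℂ) :
    Matrix n n ℂ :=
  fun i j => ∑ k, M (k, i) (k, j)

noncomputable def trB {m n : Type*} [Fintype n] (M : Matrix (m × n) (m × n) ℂ) :
    Matrix m m ℂ :=
  fun i j => ∑ k, M (i, k) (j, k)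

def IsDensity {m : Type*} [Fintype m] (ρ : Matrix m m ℂ) : Prop :=
  ρ.PosSemidef ∧ ρ.trace = 1

/-- A pure density matrix: a rank-one projector onto a unit vector. -/
def IsPure {m : Type*} [Fintype m] (ρ : Matrix m m ℂ) : Prop :=
  ∃ ψ : m → ℂ, star ψ ⬝ᵥ ψ = 1 ∧ ρ = vecMulVec ψ (star ψ)

open Unitary

theorem exists_ne_pos_pos_of_sum_eq_one {ι : Type*} [Fintype ι] [DecidableEq ι] {p : ι → ℝ}
    (hp : 0 ≤ p) (hsum : ∑ i, p i = 1) (hsingle : ∀ i, p ≠ Pi.single i 1) :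
    ∃ i j, i ≠ j ∧ 0 < p i ∧ 0 < p j := by
  by_contra! hle
  obtain ⟨i, -, hi⟩ :=
    Finset.exists_lt_of_sum_lt (s := Finset.univ) (f := 0) (g := p) (by simp [hsum])
  have hzero : ∀ j ≠ i, p j = 0 := fun j hj => le_antisymm (hle i j hj.symm hi) (hp j)
  have hone : p i = 1 := by rwa [Finset.sum_eq_single i (fun j _ => hzero j) (by simp)] at hsum
  refine hsingle i (funext fun j => ?_)
  by_cases hj : j = i
  · simp [hj, hone]
  · simp [hj, hzero j hj]

theorem exists_sum_eq_zero_abs_le {ι : Type*} [Fintype ι] [DecidableEq ι] {p : ι → ℝ}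
    (hp : 0 ≤ p) {i j : ι} (hij : i ≠ j) (hi : 0 < p i) (hj : 0 < p j) :
    ∃ c : ι → ℝ, c ≠ 0 ∧ ∑ k, c k = 0 ∧ ∀ k, |c k| ≤ p k := by
  set α := min (p i) (p j)
  refine ⟨Pi.single i α - Pi.single j α, fun h => ?_, by simp [Finset.sum_sub_distrib],
    fun k => ?_⟩
  · have := congrFun h i
    simp [hij] at this
    exact (lt_min hi hj).ne' this
  · by_cases hki : k = i
    · subst hki; simp [hij, abs_of_pos (lt_min hi hj), α]
    by_cases hkj : k = j
    · subst hkj; simp [hki, abs_of_pos (lt_min hi hj), α]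
    · simpa [hki, hkj] using hp k

theorem exists_coupling_ne_mul {m n : Type*} [Fintype m] [Fintype n] {p : m → ℝ} {q : n → ℝ}
    (hp : ∑ i, p i = 1) (hq : ∑ j, q j = 1) {c : m → ℝ} {d : n → ℝ} (hc : c ≠ 0) (hd : d ≠ 0)
    (hc0 : ∑ i, c i = 0) (hd0 : ∑ j, d j = 0) (hcp : ∀ i, |c i| ≤ p i) (hdq : ∀ j, |d j| ≤ q j) :
    ∃ r : m × n → ℝ, 0 ≤ r ∧ (∀ i, ∑ j, r (i, j) = p i) ∧ (∀ j, ∑ i, r (i, j) = q j) ∧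
      r ≠ fun x => p x.1 * q x.2 := by
  refine ⟨fun x => p x.1 * q x.2 + c x.1 * d x.2, fun x => ?_, fun i => ?_, fun j => ?_,
    fun h => ?_⟩
  · show 0 ≤ p x.1 * q x.2 + c x.1 * d x.2
    have : |c x.1 * d x.2| ≤ p x.1 * q x.2 := by
      rw [abs_mul]
      exact mul_le_mul (hcp _) (hdq _) (abs_nonneg _) ((abs_nonneg _).trans (hcp _))
    linarith [neg_abs_le (c x.1 * d x.2)]
  · simp [Finset.sum_add_distrib, ← Finset.mul_sum, hq, hd0]
  · simp [Finset.sum_add_distrib, ← Finset.sum_mul, hp, hc0]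
  · obtain ⟨i, hi⟩ := Function.ne_iff.1 hc
    obtain ⟨j, hj⟩ := Function.ne_iff.1 hd
    have := congrFun h (i, j)
    simp_all

theorem trace_trB {m n : Type*} [Fintype m] [Fintype n] (M : Matrix (m × n) (m × n) ℂ) :
    (trB M).trace = M.trace := by
  simp [trB, Matrix.trace, Fintype.sum_prod_type]

theorem trB_diagonal {m n : Type*} [Fintype n] [DecidableEq m] [DecidableEq n] (f : m × n → ℂ) :
    trB (diagonal f) = diagonal fun i => ∑ j, f (i, j) := by
  ext i i'
  by_cases h : i = i' <;> simp [trB, h]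

theorem trA_diagonal {m n : Type*} [Fintype m] [DecidableEq m] [DecidableEq n] (f : m × n → ℂ) :
    trA (diagonal f) = diagonal fun j => ∑ i, f (i, j) := by
  ext j j'
  by_cases h : j = j' <;> simp [trA, h]

theorem trB_kronecker_mul_mul_kronecker {m n : Type*} [Fintype m] [Fintype n] [DecidableEq n]
    (U U' : Matrix m m ℂ) {V V' : Matrix n n ℂ}
    (hV : V' * V = 1) (M : Matrix (m × n) (m × n) ℂ) :
    trB ((U ⊗ₖ V) * M * (U' ⊗ₖ V')) = U * trB M * U' := by
  ext i j
  have hV' (b d : n) : ∑ k, V k b * V' d k = if d = b then 1 else 0 := by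
    simpa [mul_apply, one_apply, mul_comm] using congrFun (congrFun hV d) b
  calc ∑ k, ((U ⊗ₖ V) * M * (U' ⊗ₖ V')) (i, k) (j, k)
      = ∑ y : m × n, ∑ x : m × n, U i x.1 * M x y * U' y.1 j * ∑ k, V k x.2 * V' y.2 k := by
        simp only [mul_apply, kroneckerMap_apply, Finset.sum_mul, Finset.mul_sum]
        rw [Finset.sum_comm]
        refine Finset.sum_congr rfl fun y _ => ?_
        rw [Finset.sum_comm]
        exact Finset.sum_congr rfl fun x _ => Finset.sum_congr rfl fun k _ => by ring
    _ = (U * trB M * U') i j := by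
        simp only [hV', mul_ite, mul_one, mul_zero, Fintype.sum_prod_type, Finset.sum_ite_eq,
          Finset.mem_univ, if_true, trB, mul_apply, Finset.sum_mul, Finset.mul_sum]
        exact Finset.sum_congr rfl fun c _ => Finset.sum_comm

theorem trA_kronecker_mul_mul_kronecker {m n : Type*} [Fintype m] [Fintype n] [DecidableEq m]
    {U U' : Matrix m m ℂ} (hU : U' * U = 1) (V V' : Matrix n n ℂ) (M : Matrix (m × n) (m × n) ℂ) :
    trA ((U ⊗ₖ V) * M * (U' ⊗ₖ V')) = V * trA M * V' := by
  ext i j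
  have hU' (a c : m) : ∑ k, U k a * U' c k = if c = a then 1 else 0 := by
    simpa [mul_apply, one_apply, mul_comm] using congrFun (congrFun hU c) a
  calc ∑ k, ((U ⊗ₖ V) * M * (U' ⊗ₖ V')) (k, i) (k, j)
      = ∑ y : m × n, ∑ x : m × n, V i x.2 * M x y * V' y.2 j * ∑ k, U k x.1 * U' y.1 k := by
        simp only [mul_apply, kroneckerMap_apply, Finset.sum_mul, Finset.mul_sum]
        rw [Finset.sum_comm]
        refine Finset.sum_congr rfl fun y _ => ?_
        rw [Finset.sum_comm]
        exact Finset.sum_congr rfl fun x _ => Finset.sum_congr rfl fun k _ => by ring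
    _ = (V * trA M * V') i j := by
        simp only [hU', mul_ite, mul_one, mul_zero, Fintype.sum_prod_type_right,
          Finset.sum_ite_eq, Finset.mem_univ, if_true, trA, mul_apply, Finset.sum_mul,
          Finset.mul_sum]
        exact Finset.sum_congr rfl fun d _ => Finset.sum_comm

def unitaryKronecker {m n : Type*} [Fintype m] [Fintype n] [DecidableEq m] [DecidableEq n]
    (U : unitary (Matrix m m ℂ)) (V : unitary (Matrix n n ℂ)) :
    unitary (Matrix (m × n) (m × n) ℂ) :=
  ⟨(U : Matrix m m ℂ) ⊗ₖ (V : Matrix n n ℂ), kronecker_mem_unitary U.2 V.2⟩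

section
variable {m n : Type*} [Fintype m] [Fintype n] [DecidableEq m] [DecidableEq n]

theorem coe_unitaryKronecker (U : unitary (Matrix m m ℂ)) (V : unitary (Matrix n n ℂ)) :
    (unitaryKronecker U V : Matrix (m × n) (m × n) ℂ) = (U : Matrix m m ℂ) ⊗ₖ (V : Matrix n n ℂ) :=
  rfl

theorem conjStarAlgAut_unitaryKronecker_apply (U : unitary (Matrix m m ℂ))
    (V : unitary (Matrix n n ℂ)) (M : Matrix (m × n) (m × n) ℂ) :
    conjStarAlgAut ℂ (Matrix (m × n) (m × n) ℂ) (unitaryKronecker U V) M =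
      ((U : Matrix m m ℂ) ⊗ₖ (V : Matrix n n ℂ)) * M *
        (star (U : Matrix m m ℂ) ⊗ₖ star (V : Matrix n n ℂ)) := by
  rw [conjStarAlgAut_apply, coe_unitaryKronecker, star_eq_conjTranspose, conjTranspose_kronecker]
  rfl

theorem conjStarAlgAut_unitaryKronecker (U : unitary (Matrix m m ℂ)) (V : unitary (Matrix n n ℂ))
    (X : Matrix m m ℂ) (Y : Matrix n n ℂ) :
    conjStarAlgAut ℂ (Matrix (m × n) (m × n) ℂ) (unitaryKronecker U V) (X ⊗ₖ Y) =
      conjStarAlgAut ℂ (Matrix m m ℂ) U X ⊗ₖ conjStarAlgAut ℂ (Matrix n n ℂ) V Y := by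
  rw [conjStarAlgAut_unitaryKronecker_apply, conjStarAlgAut_apply, conjStarAlgAut_apply,
    ← mul_kronecker_mul, ← mul_kronecker_mul]

theorem trB_conjStarAlgAut_unitaryKronecker (U : unitary (Matrix m m ℂ))
    (V : unitary (Matrix n n ℂ)) (M : Matrix (m × n) (m × n) ℂ) :
    trB (conjStarAlgAut ℂ (Matrix (m × n) (m × n) ℂ) (unitaryKronecker U V) M) =
      conjStarAlgAut ℂ (Matrix m m ℂ) U (trB M) :=
  (conjStarAlgAut_unitaryKronecker_apply U V M).symm ▸
    trB_kronecker_mul_mul_kronecker _ _ (star_mul_self_of_mem V.2) M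

theorem trA_conjStarAlgAut_unitaryKronecker (U : unitary (Matrix m m ℂ))
    (V : unitary (Matrix n n ℂ)) (M : Matrix (m × n) (m × n) ℂ) :
    trA (conjStarAlgAut ℂ (Matrix (m × n) (m × n) ℂ) (unitaryKronecker U V) M) =
      conjStarAlgAut ℂ (Matrix n n ℂ) V (trA M) := by
  rw [conjStarAlgAut_unitaryKronecker_apply]
  exact trA_kronecker_mul_mul_kronecker (star_mul_self_of_mem U.2) _ _ M

end

theorem Matrix.IsHermitian.isPure_of_eigenvalues_eq_single {m : Type*} [Fintype m]
    [DecidableEq m] {ρ : Matrix m m ℂ} (hρ : ρ.IsHermitian) {i : m}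
    (h : hρ.eigenvalues = Pi.single i 1) :
    IsPure ρ := by
  refine ⟨hρ.eigenvectorBasis i, ?_, ?_⟩
  · rw [dotProduct_comm, ← EuclideanSpace.inner_eq_star_dotProduct, OrthonormalBasis.inner_eq_one]
  · have hψ : star ⇑(hρ.eigenvectorBasis i) =
        Pi.single i 1 ᵥ* star (hρ.eigenvectorUnitary : Matrix m m ℂ) := by
      rw [← hρ.eigenvectorUnitary_mulVec, star_mulVec, star_eq_conjTranspose]
      simp
    have hdiag : (RCLike.ofReal ∘ hρ.eigenvalues : m → ℂ) = Pi.single i 1 := by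
      rw [h]; ext j; by_cases hj : j = i <;> simp [hj]
    conv_lhs => rw [hρ.spectral_theorem]
    rw [conjStarAlgAut_apply, hdiag, diagonal_single,
      single_eq_single_vecMulVec_single, mul_vecMulVec, vecMulVec_mul, hψ,
      hρ.eigenvectorUnitary_mulVec]

section
variable {m : Type*} [Fintype m] [DecidableEq m] {ρ : Matrix m m ℂ}

theorem IsDensity.sum_eigenvalues (h : IsDensity ρ) : ∑ i, h.1.1.eigenvalues i = 1 := by
  have := h.1.1.trace_eq_sum_eigenvalues.symm.trans h.2
  rw [← RCLike.ofReal_sum] at this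
  exact RCLike.ofReal_injective (this.trans RCLike.ofReal_one.symm)

theorem IsDensity.exists_perturbation_of_not_isPure (h : IsDensity ρ) (hρ : ¬ IsPure ρ) :
    ∃ c : m → ℝ, c ≠ 0 ∧ ∑ i, c i = 0 ∧ ∀ i, |c i| ≤ h.1.1.eigenvalues i := by
  obtain ⟨i, j, hij, hi, hj⟩ := exists_ne_pos_pos_of_sum_eq_one h.1.eigenvalues_nonneg
    h.sum_eigenvalues fun i hi => hρ (h.1.1.isPure_of_eigenvalues_eq_single hi)
  exact exists_sum_eq_zero_abs_le h.1.eigenvalues_nonneg hij hi hj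

end

section
variable {m n : Type*} [Fintype m] [Fintype n] [DecidableEq m] [DecidableEq n]
  {ρA : Matrix m m ℂ} {ρB : Matrix n n ℂ}

noncomputable def correlatedState (hA : ρA.IsHermitian) (hB : ρB.IsHermitian) (r : m × n → ℝ) :
    Matrix (m × n) (m × n) ℂ :=
  conjStarAlgAut ℂ (Matrix (m × n) (m × n) ℂ)
    (unitaryKronecker hA.eigenvectorUnitary hB.eigenvectorUnitary) (diagonal fun x => (r x : ℂ))

variable (hA : ρA.IsHermitian) (hB : ρB.IsHermitian)

theorem correlatedState_injective : Function.Injective (correlatedState hA hB) := by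
  intro r r' h
  have := diagonal_injective ((conjStarAlgAut ℂ _ _).injective h)
  exact funext fun x => Complex.ofReal_injective (congrFun this x)

theorem correlatedState_mul_eigenvalues :
    correlatedState hA hB (fun x => hA.eigenvalues x.1 * hB.eigenvalues x.2) = ρA ⊗ₖ ρB := by
  conv_rhs => rw [hA.spectral_theorem, hB.spectral_theorem]
  rw [← conjStarAlgAut_unitaryKronecker, diagonal_kronecker_diagonal]
  simp [correlatedState]

theorem posSemidef_correlatedState {r : m × n → ℝ} (hr : 0 ≤ r) :
    (correlatedState hA hB r).PosSemidef := by
  rw [correlatedState, conjStarAlgAut_apply, star_eq_conjTranspose]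
  have hdiag : (diagonal fun x => (r x : ℂ)).PosSemidef :=
    posSemidef_diagonal_iff.2 fun x => Complex.zero_le_real.2 (hr x)
  exact hdiag.mul_mul_conjTranspose_same _

theorem trB_correlatedState {r : m × n → ℝ} (hr : ∀ i, ∑ j, r (i, j) = hA.eigenvalues i) :
    trB (correlatedState hA hB r) = ρA := by
  conv_rhs => rw [hA.spectral_theorem]
  rw [correlatedState, trB_conjStarAlgAut_unitaryKronecker, trB_diagonal]
  congr 2
  ext i
  simp [← hr]

theorem trA_correlatedState {r : m × n → ℝ} (hr : ∀ j, ∑ i, r (i, j) = hB.eigenvalues j) :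
    trA (correlatedState hA hB r) = ρB := by
  conv_rhs => rw [hB.spectral_theorem]
  rw [correlatedState, trA_conjStarAlgAut_unitaryKronecker, trA_diagonal]
  congr 2
  ext j
  simp [← hr]

end

/-- Key step of Theorem 2 (non-pure implies quantum-house): if neither marginal is
pure, there is a non-product joint state with the given marginals. -/
theorem nonpure_implies_quantum_house {m n : Type*} [Fintype m] [Fintype n]
    [DecidableEq m] [DecidableEq n]
    (ρA : Matrix m m ℂ) (ρB : Matrix n n ℂ)
    (hA : IsDensity ρA) (hB : IsDensity ρB)
    (hApure : ¬ IsPure ρA) (hBpure : ¬ IsPure ρB) :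
    ∃ σ : Matrix (m × n) (m × n) ℂ,
      IsDensity σ ∧ trB σ = ρA ∧ trA σ = ρB ∧ σ ≠ ρA ⊗ₖ ρB := by
  obtain ⟨c, hc, hc0, hcp⟩ := hA.exists_perturbation_of_not_isPure hApure
  obtain ⟨d, hd, hd0, hdq⟩ := hB.exists_perturbation_of_not_isPure hBpure
  obtain ⟨r, hr, hrow, hcol, hne⟩ :=
    exists_coupling_ne_mul hA.sum_eigenvalues hB.sum_eigenvalues hc hd hc0 hd0 hcp hdq
  have htrB := trB_correlatedState hA.1.1 hB.1.1 hrow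
  refine ⟨correlatedState hA.1.1 hB.1.1 r, ⟨posSemidef_correlatedState _ _ hr, ?_⟩, htrB,
    trA_correlatedState _ _ hcol, ?_⟩
  · rw [← trace_trB, htrB, hA.2]
  · rw [← correlatedState_mul_eigenvalues hA.1.1 hB.1.1]
    exact (correlatedState_injective _ _).ne hne
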